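/- arXiv:2007.15497 — 7 statements merged into one kernel-verified Lean document; each statement's English description precedes it below -/
import Mathlib

section
/- Let n ≥ k ≥ 1 and let 0 < ε < 1. If T ≥ ln((1/ε)·C(n,k))·(k^k/k!), then choosing T independent uniformly random functions f_1,...,f_T from [n] to [k], the probability that for every k-element subset A of [n] some f_t is injective on A is at least 1 − ε. -/
/-!
A fixed `k`-set `A ⊆ [n]` is mapped injectively by a uniform random function `[n] → [k]` with
probability `p = k!/k^k`, so all `T` independent functions fail on `A` with probability
`(1 - p)^T ≤ exp (-p T) ≤ ε / C(n,k)`. A union bound over the `C(n,k)` sets `A` finishes.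
-/

open Finset

section RandomFunctions

variable {ι α β σ : Type*} [Fintype ι] [Fintype α] [Fintype β]

/-- A map injective on `s` is an injection of `s` together with an arbitrary map on `sᶜ`. -/
theorem card_filter_injOn [DecidableEq α] (s : Finset α)
    [DecidablePred fun f : α → β => Set.InjOn f s] :
    #{f : α → β | Set.InjOn f s} =
      (Fintype.card β).descFactorial #s * Fintype.card β ^ (Fintype.card α - #s) := by
  rw [← Fintype.card_subtype]
  let e : {f : α → β // Set.InjOn f s} ≃ (s ↪ β) × ({a // a ∉ s} → β) :=
    ((Equiv.subtypeEquiv (Equiv.piEquivPiSubtypeProd (· ∈ s) fun _ => β)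
      fun f => Set.injOn_iff_injective).trans Equiv.prodSubtypeFstEquivSubtypeProd).trans
      ((Equiv.subtypeInjectiveEquivEmbedding _ _).prodCongr (Equiv.refl _))
  rw [Fintype.card_congr e, Fintype.card_prod, Fintype.card_embedding_eq, Fintype.card_fun,
    Fintype.card_subtype_compl, Fintype.card_coe]

theorem card_filter_injOn_div [DecidableEq α] [Nonempty β] (s : Finset α)
    [DecidablePred fun f : α → β => Set.InjOn f s] :
    (#{f : α → β | Set.InjOn f s} : ℝ) / Fintype.card β ^ Fintype.card α =
      (Fintype.card β).descFactorial #s / Fintype.card β ^ #s := by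
  have hβ : (0 : ℝ) < Fintype.card β := by exact_mod_cast Fintype.card_pos
  rw [card_filter_injOn, ← Nat.add_sub_cancel' (card_le_univ s)]
  push_cast
  rw [Nat.add_sub_cancel_left, pow_add]
  field_simp

theorem card_filter_forall_apply [DecidableEq ι] (p : α → Prop) [DecidablePred p]
    [DecidablePred fun F : ι → α => ∀ i, p (F i)] :
    #{F : ι → α | ∀ i, p (F i)} = #{a | p a} ^ Fintype.card ι := by
  have : ({F : ι → α | ∀ i, p (F i)} : Finset (ι → α)) =
      Fintype.piFinset fun _ => {a | p a} := by
    ext F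
    simp [Fintype.mem_piFinset]
  rw [this, Fintype.card_piFinset, prod_const, card_univ]

theorem card_filter_card_eq [DecidableEq α] (k : ℕ) :
    #{s : Finset α | #s = k} = (Fintype.card α).choose k := by
  rw [← card_univ, ← card_powersetCard]
  congr 1
  ext s
  simp

theorem card_filter_not_forall_exists_le [DecidableEq ι] [Fintype σ]
    (Q : σ → Prop) (P : σ → α → Prop) [DecidablePred Q] [∀ s, DecidablePred (P s)]
    [DecidablePred fun F : ι → α => ∀ s, Q s → ∃ i, P s (F i)] :
    #{F : ι → α | ¬ ∀ s, Q s → ∃ i, P s (F i)} ≤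
      ∑ s with Q s, #{a | ¬ P s a} ^ Fintype.card ι := by
  classical
  calc #{F : ι → α | ¬ ∀ s, Q s → ∃ i, P s (F i)}
      ≤ #(({s | Q s} : Finset σ).biUnion fun s => {F : ι → α | ∀ i, ¬ P s (F i)}) := by
        refine card_le_card fun F hF => ?_
        simp only [mem_filter, mem_univ, true_and, not_forall, not_exists] at hF
        obtain ⟨s, hs, hsF⟩ := hF
        simpa using ⟨s, hs, hsF⟩
    _ ≤ ∑ s with Q s, #{F : ι → α | ∀ i, ¬ P s (F i)} := card_biUnion_le
    _ = ∑ s with Q s, #{a | ¬ P s a} ^ Fintype.card ι :=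
        sum_congr rfl fun s _ => by convert card_filter_forall_apply (ι := ι) (¬ P s ·)

theorem one_sub_sum_le_card_filter_forall_exists_div [DecidableEq ι] [Fintype σ] [Nonempty α]
    (Q : σ → Prop) (P : σ → α → Prop) [DecidablePred Q] [∀ s, DecidablePred (P s)]
    [DecidablePred fun F : ι → α => ∀ s, Q s → ∃ i, P s (F i)] :
    1 - ∑ s with Q s, (1 - #{a | P s a} / Fintype.card α : ℝ) ^ Fintype.card ι ≤
      #{F : ι → α | ∀ s, Q s → ∃ i, P s (F i)} /
        (Fintype.card α : ℝ) ^ Fintype.card ι := by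
  have hα : (0 : ℝ) < Fintype.card α := by exact_mod_cast Fintype.card_pos
  have hmiss (s : σ) :
      (1 - #{a | P s a} / Fintype.card α : ℝ) = #{a | ¬ P s a} / Fintype.card α := by
    rw [eq_div_iff hα.ne', sub_mul, div_mul_cancel₀ _ hα.ne', one_mul, sub_eq_iff_eq_add']
    exact_mod_cast (card_filter_add_card_filter_not (s := univ) (P s)).symm
  have htotal : (#{F : ι → α | ∀ s, Q s → ∃ i, P s (F i)} : ℝ) +
      #{F : ι → α | ¬ ∀ s, Q s → ∃ i, P s (F i)} =
        (Fintype.card α : ℝ) ^ Fintype.card ι := by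
    exact_mod_cast (card_filter_add_card_filter_not (s := univ) _).trans (by simp)
  have hbad : (#{F : ι → α | ¬ ∀ s, Q s → ∃ i, P s (F i)} : ℝ) ≤
      ∑ s with Q s, (#{a | ¬ P s a} : ℝ) ^ Fintype.card ι := by
    exact_mod_cast card_filter_not_forall_exists_le Q P
  rw [le_div_iff₀ (by positivity)]
  simp only [hmiss, div_pow, ← sum_div]
  rw [sub_mul, div_mul_cancel₀ _ (by positivity)]
  linarith

end RandomFunctions

theorem mul_one_sub_pow_le_of_log_le {C ε p : ℝ} {T : ℕ} (hC : 0 ≤ C) (hε : 0 < ε)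
    (hp : p ≤ 1) (h : Real.log (C / ε) ≤ p * T) : C * (1 - p) ^ T ≤ ε := by
  obtain rfl | hC := hC.eq_or_lt
  · simpa using hε.le
  calc C * (1 - p) ^ T ≤ C * Real.exp (-p) ^ T := by
        gcongr
        exact Real.one_sub_le_exp_neg p
    _ = C * Real.exp (-(p * T)) := by rw [← Real.exp_nat_mul]; ring_nf
    _ ≤ C * Real.exp (-Real.log (C / ε)) := by gcongr
    _ = ε := by rw [Real.exp_neg, Real.exp_log (by positivity)]; field_simp

theorem stmt1_general (n k T : ℕ) (hk : 1 ≤ k) (ε : ℝ) (hε0 : 0 < ε)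
    (hT : (T : ℝ) ≥ Real.log ((1 / ε) * (Nat.choose n k : ℝ)) *
      ((k : ℝ) ^ k / (Nat.factorial k : ℝ))) :
    ((Finset.univ.filter (fun F : Fin T → Fin n → Fin k =>
        ∀ A : Finset (Fin n), A.card = k → ∃ t : Fin T,
          Set.InjOn (F t) (A : Set (Fin n)))).card : ℝ)
      / (((k : ℝ) ^ n) ^ T) ≥ 1 - ε := by
  have : Nonempty (Fin k) := ⟨⟨0, hk⟩⟩
  set p : ℝ := k.factorial / k ^ k
  have hp : p ≤ 1 := by
    rw [div_le_one (by positivity)]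
    exact_mod_cast Nat.factorial_le_pow k
  have hhit (A : Finset (Fin n)) (hA : #A = k) :
      (#{f : Fin n → Fin k | Set.InjOn f A} : ℝ) / Fintype.card (Fin n → Fin k) = p := by
    rw [Fintype.card_fun, Nat.cast_pow, card_filter_injOn_div]
    simp [hA, Nat.descFactorial_self, p]
  have hlog : Real.log (n.choose k / ε) ≤ p * T := by
    have hkk : (k : ℝ) ^ k / k.factorial * p = 1 := by simp only [p]; field_simp
    calc Real.log (n.choose k / ε)
          = Real.log ((1 / ε) * n.choose k) * (k ^ k / k.factorial * p) := by
          rw [hkk, mul_one, one_div_mul_eq_div]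
      _ ≤ p * T := by rw [← mul_assoc, mul_comm p]; gcongr
  have hcover := one_sub_sum_le_card_filter_forall_exists_div (ι := Fin T)
    (fun A : Finset (Fin n) => #A = k) fun A (f : Fin n → Fin k) => Set.InjOn f (A : Set (Fin n))
  rw [sum_congr rfl fun A hA => by rw [hhit A (mem_filter.1 hA).2], sum_const,
    card_filter_card_eq, nsmul_eq_mul, Fintype.card_fun, Fintype.card_fin, Fintype.card_fin,
    Fintype.card_fin] at hcover
  calc 1 - ε ≤ 1 - n.choose k * (1 - p) ^ T := by
        gcongr
        exact mul_one_sub_pow_le_of_log_le (by positivity) hε0 hp hlog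
    _ ≤ _ := by simpa using hcover

/-- If T ≥ ln((1/ε)·C(n,k))·(k^k/k!), then T independent uniform random functions
[n] → [k] form a perfect hash family for size-k subsets with probability ≥ 1 − ε. -/
theorem stmt1 (n k T : ℕ) (hk : 1 ≤ k) (hkn : k ≤ n) (ε : ℝ) (hε0 : 0 < ε) (hε1 : ε < 1)
    (hT : (T : ℝ) ≥ Real.log ((1 / ε) * (Nat.choose n k : ℝ)) *
      ((k : ℝ) ^ k / (Nat.factorial k : ℝ))) :
    ((Finset.univ.filter (fun F : Fin T → Fin n → Fin k =>
        ∀ A : Finset (Fin n), A.card = k → ∃ t : Fin T,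
          Set.InjOn (F t) (A : Set (Fin n)))).card : ℝ)
      / (((k : ℝ) ^ n) ^ T) ≥ 1 - ε :=
  stmt1_general n k T hk ε hε0 hT
end

section
/- For all n ≥ k ≥ 1, there exists a family of at most ⌈ln(C(n,k))·(k^k/k!)⌉ + 1 functions from [n] to [k] such that for every k-element subset A of [n], at least one function in the family is injective on A. -/
/-!
Pick `T = ⌈ln C(n,k) · k^k/k!⌉ + 1` functions `[n] → [k]` independently and uniformly. A fixed
`k`-set is mapped injectively by one of them with probability `p = k!/k^k`, so it is missed by
all of them with probability `(1 - p)^T ≤ exp(-pT) < 1/C(n,k)`. By the union bound some family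
misses no `k`-set. Over ℕ the same argument is run with counts of functions in place of
probabilities.
-/

open Finset
open scoped Nat

theorem Nat.card_injOn {α β : Type*} [Fintype α] [Fintype β] (A : Finset α) :
    Nat.card {g : α → β // Set.InjOn g A} =
      (Fintype.card β).descFactorial #A * Fintype.card β ^ (Fintype.card α - #A) := by
  classical
  let e := Equiv.piEquivPiSubtypeProd (· ∈ A) (fun _ => β)
  have hinj (g : α → β) : Set.InjOn g A ↔ Function.Injective (e g).1 := by
    simp only [Set.InjOn, Function.Injective, Subtype.forall, Subtype.ext_iff, mem_coe]
    rfl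
  rw [Nat.card_congr ((e.subtypeEquiv hinj).trans Equiv.prodSubtypeFstEquivSubtypeProd),
    Nat.card_prod, Nat.card_congr (Equiv.subtypeInjectiveEquivEmbedding _ _)]
  simp only [Nat.card_eq_fintype_card, Fintype.card_embedding_eq, Fintype.card_fun,
    Fintype.card_subtype_compl, Fintype.card_coe]

theorem Nat.card_not_injOn {α β : Type*} [Fintype α] [Fintype β] (A : Finset α) :
    Nat.card {g : α → β // ¬ Set.InjOn g A} = Fintype.card β ^ Fintype.card α -
      (Fintype.card β).descFactorial #A * Fintype.card β ^ (Fintype.card α - #A) := by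
  classical
  rw [← Nat.card_injOn, Nat.card_eq_fintype_card, Fintype.card_subtype_compl,
    Nat.card_eq_fintype_card, Fintype.card_fun]

theorem exists_forall_not_of_card_mul_lt {σ γ : Type*} [Finite γ] (S : Finset σ)
    (bad : σ → γ → Prop) (N : ℕ) (hN : ∀ A ∈ S, Nat.card {x // bad A x} ≤ N)
    (h : #S * N < Nat.card γ) : ∃ x, ∀ A ∈ S, ¬ bad A x := by
  classical
  have := Fintype.ofFinite γ
  by_contra! hcover
  have hsub : (univ : Finset γ) ⊆ S.biUnion fun A => {x | bad A x} := fun x _ => by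
    obtain ⟨A, hA, hx⟩ := hcover x
    exact mem_biUnion.2 ⟨A, hA, mem_filter.2 ⟨mem_univ x, hx⟩⟩
  refine h.not_ge ?_
  calc Nat.card γ = #(univ : Finset γ) := by rw [card_univ, Nat.card_eq_fintype_card]
    _ ≤ #S * N := (card_le_card hsub).trans <| card_biUnion_le_card_mul _ _ _ fun A hA => by
        rw [← Fintype.card_subtype, ← Nat.card_eq_fintype_card]; exact hN A hA

theorem exists_pi_forall_exists_of_card_mul_pow_lt {ι σ γ : Type*} [Fintype ι] [Finite γ]
    (S : Finset σ) (good : σ → γ → Prop) (N : ℕ)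
    (hN : ∀ A ∈ S, Nat.card {x // ¬ good A x} ≤ N)
    (h : #S * N ^ Fintype.card ι < Nat.card γ ^ Fintype.card ι) :
    ∃ F : ι → γ, ∀ A ∈ S, ∃ t, good A (F t) := by
  have hbad (A : σ) : Nat.card {F : ι → γ // ∀ t, ¬ good A (F t)} =
      Nat.card {x // ¬ good A x} ^ Fintype.card ι := by
    rw [Nat.card_congr (Equiv.subtypePiEquivPi (p := fun _ x => ¬ good A x)), Nat.card_fun,
      Nat.card_eq_fintype_card (α := ι)]
  obtain ⟨F, hF⟩ := exists_forall_not_of_card_mul_lt S (fun A (F : ι → γ) => ∀ t, ¬ good A (F t))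
    (N ^ Fintype.card ι) (fun A hA => (hbad A).le.trans (Nat.pow_le_pow_left (hN A hA) _))
    (by rwa [Nat.card_fun, Nat.card_eq_fintype_card (α := ι)])
  exact ⟨F, fun A hA => by simpa using hF A hA⟩

theorem mul_one_sub_pow_lt_one {C p : ℝ} {T : ℕ} (hC : 0 < C) (hp : p ≤ 1)
    (hT : Real.log C < p * T) : C * (1 - p) ^ T < 1 := by
  calc C * (1 - p) ^ T ≤ C * Real.exp (-p) ^ T := by
        gcongr
        linarith [Real.add_one_le_exp (-p)]
    _ = C * Real.exp (-(p * T)) := by rw [← Real.exp_nat_mul]; ring_nf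
    _ < C * Real.exp (-Real.log C) := by gcongr
    _ = 1 := by rw [Real.exp_neg, Real.exp_log hC, mul_inv_cancel₀ hC.ne']

theorem mul_sub_pow_lt_pow {C M G T : ℕ} (hC : 0 < C) (hGM : G ≤ M) (hM : 0 < M)
    (hT : Real.log C < G / M * T) : C * (M - G) ^ T < M ^ T := by
  have hM' : (0 : ℝ) < M := by exact_mod_cast hM
  have key := mul_one_sub_pow_lt_one (by exact_mod_cast hC)
    (div_le_one_of_le₀ (by exact_mod_cast hGM) hM'.le) hT
  rw [one_sub_div hM'.ne', div_pow, mul_div_assoc', div_lt_one (by positivity)] at key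
  exact_mod_cast (by push_cast [hGM]; exact key : (C * (M - G) ^ T : ℝ) < (M ^ T : ℕ))

/-- For n ≥ k ≥ 1 there exists a family of at most ⌈ln(C(n,k))·(k^k/k!)⌉ + 1 functions
from [n] to [k] such that every k-element subset of [n] admits an injective member. -/
theorem stmt2 (n k : ℕ) (hk : 1 ≤ k) (hkn : k ≤ n) :
    ∃ (T : ℕ) (F : Fin T → Fin n → Fin k),
      T ≤ ⌈Real.log (Nat.choose n k : ℝ) * ((k : ℝ) ^ k / (Nat.factorial k : ℝ))⌉₊ + 1 ∧
      ∀ A : Finset (Fin n), A.card = k → ∃ t : Fin T,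
        Set.InjOn (F t) (A : Set (Fin n)) := by
  set T := ⌈Real.log (n.choose k : ℝ) * ((k : ℝ) ^ k / (k ! : ℝ))⌉₊ + 1
  have hsplit : k ^ n = k ^ k * k ^ (n - k) := by rw [← pow_add, Nat.add_sub_cancel' hkn]
  have hgood : k ! * k ^ (n - k) ≤ k ^ n :=
    hsplit ▸ Nat.mul_le_mul_right _ (Nat.factorial_le_pow k)
  have hT : Real.log (n.choose k) < (k ! * k ^ (n - k) : ℕ) / (k ^ n : ℕ) * T := by
    have hratio : ((k ! * k ^ (n - k) : ℕ) : ℝ) / (k ^ n : ℕ) = k ! / k ^ k := by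
      rw [hsplit]; push_cast; field_simp
    have hlt : Real.log (n.choose k) * ((k : ℝ) ^ k / (k ! : ℝ)) < T :=
      (Nat.le_ceil _).trans_lt (Nat.cast_lt.2 (Nat.lt_succ_self _))
    rw [hratio]
    calc Real.log (n.choose k)
        = Real.log (n.choose k) * ((k : ℝ) ^ k / (k ! : ℝ)) * (k ! / k ^ k) := by field_simp
      _ < k ! / k ^ k * T := by rw [mul_comm _ (T : ℝ)]; gcongr
  obtain ⟨F, hF⟩ := exists_pi_forall_exists_of_card_mul_pow_lt (ι := Fin T)
    (powersetCard k (univ : Finset (Fin n))) (fun A (g : Fin n → Fin k) => Set.InjOn g A)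
    (k ^ n - k ! * k ^ (n - k))
    (fun A hA => by
      rw [Nat.card_not_injOn, mem_powersetCard_univ.1 hA]; simp [Nat.descFactorial_self])
    (by simpa using mul_sub_pow_lt_pow (Nat.choose_pos hkn) hgood (by positivity) hT)
  exact ⟨T, F, le_rfl, fun A hA => hF A (mem_powersetCard_univ.2 hA)⟩
end

section
/- Any family of T functions from [n] to [k] such that every k-element subset of [n] admits an injective function in the family must satisfy T ≥ C(n,k)/(n/k)^k. -/
/-!
A function `f : [n] → [k]` is injective on a `k`-set `A` exactly when `A` meets every fibre
of `f` in one point, so it is injective on at most `∏ b, |f⁻¹(b)|` of the `k`-sets. The fibre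
sizes sum to `n`, so by AM-GM this product is at most `(n/k)^k`. As the `T` functions together
must cover all `C(n,k)` of the `k`-sets, `C(n,k) ≤ T (n/k)^k`.
-/

open Finset

theorem Real.prod_le_pow_sum_div_card {ι : Type*} [Fintype ι] (x : ι → ℝ) (hx : ∀ i, 0 ≤ x i) :
    ∏ i, x i ≤ ((∑ i, x i) / Fintype.card ι) ^ Fintype.card ι := by
  rcases isEmpty_or_nonempty ι with _ | _
  · simp
  have hcard : (0 : ℝ) < Fintype.card ι := by exact_mod_cast Fintype.card_pos
  have hamgm := Real.geom_mean_le_arith_mean univ (fun _ => 1) x (fun _ _ => zero_le_one)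
    (by simpa using hcard) (fun i _ => hx i)
  simp only [Real.rpow_one, one_mul, sum_const, card_univ, nsmul_one] at hamgm
  calc ∏ i, x i
      = ((∏ i, x i) ^ ((Fintype.card ι : ℝ)⁻¹)) ^ Fintype.card ι :=
        (Real.rpow_inv_natCast_pow (prod_nonneg fun i _ => hx i) Fintype.card_ne_zero).symm
    _ ≤ ((∑ i, x i) / Fintype.card ι) ^ Fintype.card ι := by
        gcongr
        exact Real.rpow_nonneg (prod_nonneg fun i _ => hx i) _

section InjOnFibres

open scoped Classical

variable {α β : Type*} [Fintype α]

noncomputable def powersetCardInjOn (f : α → β) (k : ℕ) : Finset (Finset α) :=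
  (powersetCard k univ).filter fun A => Set.InjOn f ↑A

theorem mem_powersetCardInjOn {f : α → β} {k : ℕ} {A : Finset α} :
    A ∈ powersetCardInjOn f k ↔ #A = k ∧ Set.InjOn f ↑A := by
  simp [powersetCardInjOn]

variable [Fintype β]

theorem card_powersetCardInjOn_le_prod_card_fiber (f : α → β) :
    #(powersetCardInjOn f (Fintype.card β)) ≤ ∏ b, #{a | f a = b} := by
  have hsub : powersetCardInjOn f (Fintype.card β) ⊆
      (Fintype.piFinset fun b => {a | f a = b}).image fun g => univ.image g := by
    intro A hA
    obtain ⟨hAcard, hinj⟩ : #A = Fintype.card β ∧ Set.InjOn f ↑A := mem_powersetCardInjOn.1 hA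
    have himage : A.image f = univ :=
      eq_univ_of_card _ (by rw [card_image_of_injOn hinj, hAcard])
    have hsurj : ∀ b, ∃ a ∈ A, f a = b := fun b => mem_image.1 (himage ▸ mem_univ b)
    choose g hgA hfg using hsurj
    refine mem_image.2 ⟨g, by simp [hfg], ?_⟩
    refine eq_of_subset_of_card_le (image_subset_iff.2 fun b _ => hgA b) ?_
    rw [card_image_of_injective _ (Function.LeftInverse.injective hfg), card_univ, hAcard]
  calc _ ≤ _ := card_le_card hsub
    _ ≤ _ := card_image_le
    _ = _ := Fintype.card_piFinset _

theorem card_powersetCardInjOn_le_pow (f : α → β) :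
    (#(powersetCardInjOn f (Fintype.card β)) : ℝ) ≤
      ((Fintype.card α : ℝ) / Fintype.card β) ^ Fintype.card β := by
  have hsum : ∑ b, (#{a | f a = b} : ℝ) = Fintype.card α := by
    rw [← Nat.cast_sum, ← card_eq_sum_card_fiberwise (fun a _ => mem_univ (f a)), card_univ]
  calc (#(powersetCardInjOn f (Fintype.card β)) : ℝ)
      ≤ ∏ b, (#{a | f a = b} : ℝ) := by
        exact_mod_cast card_powersetCardInjOn_le_prod_card_fiber f
    _ ≤ _ := by
        simpa only [hsum] using
          Real.prod_le_pow_sum_div_card (fun b => (#{a | f a = b} : ℝ)) fun b => Nat.cast_nonneg _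

end InjOnFibres

theorem stmt4_general (n k T : ℕ)
    (F : Fin T → Fin n → Fin k)
    (hF : ∀ A : Finset (Fin n), A.card = k → ∃ t : Fin T,
      Set.InjOn (F t) (A : Set (Fin n))) :
    (T : ℝ) ≥ (Nat.choose n k : ℝ) / ((n : ℝ) / (k : ℝ)) ^ k := by
  have hcover : powersetCard k univ ⊆
      univ.biUnion fun t => powersetCardInjOn (F t) k := by
    intro A hA
    obtain ⟨t, ht⟩ := hF A (mem_powersetCard.1 hA).2
    exact mem_biUnion.2 ⟨t, mem_univ t, mem_powersetCardInjOn.2 ⟨(mem_powersetCard.1 hA).2, ht⟩⟩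
  have hbound : (n.choose k : ℝ) ≤ T * ((n : ℝ) / k) ^ k :=
    calc (n.choose k : ℝ) = #(powersetCard k (univ : Finset (Fin n))) := by simp
      _ ≤ ∑ t, (#(powersetCardInjOn (F t) k) : ℝ) := by
          exact_mod_cast (card_le_card hcover).trans card_biUnion_le
      _ ≤ ∑ _t : Fin T, ((n : ℝ) / k) ^ k := sum_le_sum fun t _ => by
          simpa using card_powersetCardInjOn_le_pow (F t)
      _ = T * ((n : ℝ) / k) ^ k := by simp
  exact div_le_of_le_mul₀ (by positivity) (Nat.cast_nonneg _) hbound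

/-- Any family of T functions [n] → [k] such that every k-element subset of [n]
admits an injective member must satisfy T ≥ C(n,k)/(n/k)^k. -/
theorem stmt4 (n k T : ℕ) (hk : 1 ≤ k) (hkn : k ≤ n)
    (F : Fin T → Fin n → Fin k)
    (hF : ∀ A : Finset (Fin n), A.card = k → ∃ t : Fin T,
      Set.InjOn (F t) (A : Set (Fin n))) :
    (T : ℝ) ≥ (Nat.choose n k : ℝ) / ((n : ℝ) / (k : ℝ)) ^ k :=
  stmt4_general n k T F hF
end

section
/- Any family of T functions from [n] to [k] (k ≥ 2) such that every k-element subset of [n] admits an injective member must satisfy T ≥ (log n − log(k−1))/(log k − log(k−1)). -/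
open Finset

lemma aux1 {n k : ℕ} (hk : 0 < k) (f : Fin n → Fin k) (S : Finset (Fin n)) :
    ∃ v : Fin k, (k - 1) * S.card ≤ k * (S.filter (fun x => f x ≠ v)).card := by
  have hne : (Finset.univ : Finset (Fin k)).Nonempty := ⟨⟨0, hk⟩, mem_univ _⟩
  obtain ⟨v, -, hv⟩ := Finset.exists_min_image Finset.univ
    (fun v => (S.filter (fun x => f x = v)).card) hne
  refine ⟨v, ?_⟩
  have hsum : S.card = ∑ w : Fin k, (S.filter fun x => f x = w).card :=
    Finset.card_eq_sum_card_fiberwise (fun x _ => mem_univ _)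
  have hkm : k * (S.filter (fun x => f x = v)).card ≤ S.card := by
    rw [hsum]
    calc k * (S.filter (fun x => f x = v)).card
        = ∑ _w : Fin k, (S.filter fun x => f x = v).card := by
          simp [Finset.sum_const, Finset.card_univ, mul_comm]
      _ ≤ _ := Finset.sum_le_sum fun w _ => hv w (mem_univ w)
  have hm : (S.filter fun x => f x = v).card ≤ S.card :=
    Finset.card_le_card (filter_subset _ _)
  have hsplit : (S.filter fun x => f x ≠ v).card
      = S.card - (S.filter fun x => f x = v).card := by
    rw [Finset.filter_not, Finset.card_sdiff_of_subset (Finset.filter_subset _ _)]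
  rw [hsplit]
  zify [hm, Nat.one_le_iff_ne_zero.mpr hk.ne']
  push_cast at hkm
  nlinarith

noncomputable def snirChain {n k T : ℕ} (hk : 0 < k) (F : Fin T → Fin n → Fin k) :
    ℕ → Finset (Fin n)
  | 0 => Finset.univ
  | (t+1) =>
    let S := snirChain hk F t
    if h : t < T then
      S.filter (fun x => F ⟨t, h⟩ x ≠ Classical.choose (aux1 hk (F ⟨t, h⟩) S))
    else S

lemma snirChain_succ_subset {n k T : ℕ} (hk : 0 < k) (F : Fin T → Fin n → Fin k) (t : ℕ) :
    snirChain hk F (t+1) ⊆ snirChain hk F t := by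
  rw [snirChain]
  split
  · exact Finset.filter_subset _ _
  · exact subset_rfl

lemma snirChain_anti {n k T : ℕ} (hk : 0 < k) (F : Fin T → Fin n → Fin k)
    {s t : ℕ} (h : s ≤ t) : snirChain hk F t ⊆ snirChain hk F s := by
  induction t with
  | zero => simpa [Nat.le_zero.mp h]
  | succ t ih =>
    rcases Nat.le_succ_iff.mp h with h' | h'
    · exact (snirChain_succ_subset hk F t).trans (ih h')
    · simp [h']

lemma snirChain_card {n k T : ℕ} (hk : 0 < k) (F : Fin T → Fin n → Fin k) (t : ℕ) :
    (k - 1)^t * n ≤ k^t * (snirChain hk F t).card := by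
  induction t with
  | zero => simp [snirChain]
  | succ t ih =>
    have hstep : (k - 1) * (snirChain hk F t).card ≤ k * (snirChain hk F (t+1)).card := by
      rw [snirChain]
      split
      · exact Classical.choose_spec (aux1 hk (F ⟨t, by assumption⟩) (snirChain hk F t))
      · exact Nat.mul_le_mul_right _ (Nat.sub_le k 1)
    calc (k - 1)^(t+1) * n = (k - 1) * ((k - 1)^t * n) := by ring
      _ ≤ (k - 1) * (k^t * (snirChain hk F t).card) := Nat.mul_le_mul_left _ ih
      _ = k^t * ((k - 1) * (snirChain hk F t).card) := by ring
      _ ≤ k^t * (k * (snirChain hk F (t+1)).card) := Nat.mul_le_mul_left _ hstep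
      _ = k^(t+1) * (snirChain hk F (t+1)).card := by ring

lemma snirChain_image {n k T : ℕ} (hk : 0 < k) (F : Fin T → Fin n → Fin k) (t : Fin T) :
    ((snirChain hk F T).image (F t)).card ≤ k - 1 := by
  set v := Classical.choose (aux1 hk (F ⟨t.1, t.2⟩) (snirChain hk F t.1)) with hv
  have hsub : (snirChain hk F T).image (F t) ⊆ Finset.univ.erase v := by
    intro y hy
    obtain ⟨x, hx, rfl⟩ := Finset.mem_image.mp hy
    have hx' : x ∈ snirChain hk F (t.1 + 1) := snirChain_anti hk F t.2 hx
    rw [snirChain] at hx'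
    simp only [t.2, dif_pos] at hx'
    have := (Finset.mem_filter.mp hx').2
    rw [Finset.mem_erase]
    exact ⟨by simpa [Fin.eta] using this, Finset.mem_univ _⟩
  calc _ ≤ (Finset.univ.erase v).card := Finset.card_le_card hsub
    _ = k - 1 := by rw [Finset.card_erase_of_mem (mem_univ _), Finset.card_univ, Fintype.card_fin]

/-- Snir's bound: any family of T functions [n] → [k] (k ≥ 2) such that every
k-element subset of [n] admits an injective member satisfies
T ≥ (log n − log(k−1))/(log k − log(k−1)), logs base 2. -/
theorem stmt5 (n k T : ℕ) (hk : 2 ≤ k) (hkn : k ≤ n)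
    (F : Fin T → Fin n → Fin k)
    (hF : ∀ A : Finset (Fin n), A.card = k → ∃ t : Fin T,
      Set.InjOn (F t) (A : Set (Fin n))) :
    (T : ℝ) ≥ (Real.logb 2 n - Real.logb 2 (k - 1)) /
      (Real.logb 2 k - Real.logb 2 (k - 1)) := by
  have hk0 : 0 < k := by omega
  -- final set has at most k-1 elements
  have hfin : (snirChain hk0 F T).card ≤ k - 1 := by
    by_contra h
    push_neg at h
    have hkc : k ≤ (snirChain hk0 F T).card := by omega
    obtain ⟨A, hA, hAcard⟩ := Finset.exists_subset_card_eq hkc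
    obtain ⟨t, ht⟩ := hF A hAcard
    have h1 : (A.image (F t)).card = k := by
      rw [Finset.card_image_of_injOn ht, hAcard]
    have h2 : (A.image (F t)).card ≤ k - 1 :=
      le_trans (Finset.card_le_card (Finset.image_subset_image hA)) (snirChain_image hk0 F t)
    omega
  have key : (k - 1)^T * n ≤ k^T * (k - 1) :=
    (snirChain_card hk0 F T).trans (Nat.mul_le_mul_left _ hfin)
  -- pass to the reals
  have h1k : (1 : ℕ) ≤ k := by omega
  have keyR : ((k : ℝ) - 1)^T * n ≤ (k : ℝ)^T * ((k : ℝ) - 1) := by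
    have := (Nat.cast_le (α := ℝ)).mpr key
    push_cast [Nat.cast_sub h1k] at this
    exact this
  set a : ℝ := (k : ℝ) with ha
  have hb1 : (1 : ℝ) ≤ a - 1 := by
    have : (2 : ℝ) ≤ a := by rw [ha]; exact_mod_cast hk
    linarith
  have hb0 : (0 : ℝ) < a - 1 := by linarith
  have ha0 : (0 : ℝ) < a := by linarith
  have hba : a - 1 < a := by linarith
  have hn0 : (0 : ℝ) < n := by
    have : 0 < n := by omega
    exact_mod_cast this
  have hnle : (n : ℝ) ≤ a^T * (a - 1) / (a - 1)^T := by
    rw [le_div_iff₀ (by positivity)]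
    calc (n : ℝ) * (a - 1)^T = (a - 1)^T * n := by ring
      _ ≤ a^T * (a - 1) := keyR
  have hlog : Real.logb 2 n ≤ T * Real.logb 2 a + Real.logb 2 (a - 1) - T * Real.logb 2 (a - 1) := by
    have h1 : Real.logb 2 n ≤ Real.logb 2 (a^T * (a - 1) / (a - 1)^T) :=
      Real.logb_le_logb_of_le (by norm_num : (1:ℝ) < 2) hn0 hnle
    rw [Real.logb_div (by positivity) (by positivity), Real.logb_mul (by positivity) (by positivity),
      Real.logb_pow, Real.logb_pow] at h1
    linarith
  have hd : 0 < Real.logb 2 a - Real.logb 2 (a - 1) := by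
    have := Real.logb_lt_logb (by norm_num : (1:ℝ) < 2) hb0 hba
    linarith
  rw [ge_iff_le, div_le_iff₀ hd]
  linarith
end

section
/- Let A be uniformly distributed over k-element subsets of [n], and let f be any function mapping k-element subsets of [n] to a countable index set such that each index t is assigned only to subsets covered by a single associated k-partition of [n]. Then the entropy H(f(A)) ≥ (1 − (n^k k!)/(n^{\underline{k}} k^k))·log(k^k/k!) − log(n^k/n^{\underline{k}}), where n^{\underline{k}} = n(n−1)···(n−k+1). -/
open Real Finset

/-!
A fiber of `f` consists of `k`-sets on which `P t` is injective, i.e. transversals of the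
`k` blocks of `P t`. A transversal is the image of a section of `P t`, so there are at most
`∏ |block| ≤ (n/k)^k` of them by AM-GM. Hence every value of `f A` has probability at most
`v = (n/k)^k / C(n,k) = (n^k / n^{(k)}) / (k^k / k!)`, and a distribution with all masses at
most `v` has entropy at least `log (1/v)`, which dominates the claimed bound since `k! ≤ k^k`.
-/

theorem Real.prod_mul_card_pow_le_sum_pow {ι : Type*} (s : Finset ι) (m : ι → ℝ)
    (hm : ∀ i ∈ s, 0 ≤ m i) : (∏ i ∈ s, m i) * (#s : ℝ) ^ #s ≤ (∑ i ∈ s, m i) ^ #s := by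
  rcases s.eq_empty_or_nonempty with rfl | hs
  · simp
  have hcard : (0 : ℝ) < #s := by exact_mod_cast hs.card_pos
  have amgm := geom_mean_le_arith_mean_weighted s (fun _ => (#s : ℝ)⁻¹) m
    (fun _ _ => by positivity) (by simp [hcard.ne']) hm
  have hprod : (∏ i ∈ s, m i ^ (#s : ℝ)⁻¹) ^ #s = ∏ i ∈ s, m i := by
    rw [← prod_pow]
    refine prod_congr rfl fun i hi => ?_
    rw [← rpow_natCast, ← rpow_mul (hm i hi), inv_mul_cancel₀ hcard.ne', rpow_one]
  calc (∏ i ∈ s, m i) * (#s : ℝ) ^ #s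
      = (∏ i ∈ s, m i ^ (#s : ℝ)⁻¹) ^ #s * (#s : ℝ) ^ #s := by rw [hprod]
    _ ≤ (∑ i ∈ s, (#s : ℝ)⁻¹ * m i) ^ #s * (#s : ℝ) ^ #s := by
        gcongr
        exact prod_nonneg fun i hi => rpow_nonneg (hm i hi) _
    _ = (∑ i ∈ s, m i) ^ #s := by
        rw [← mul_sum, ← mul_pow, mul_comm, mul_inv_cancel_left₀ hcard.ne']

section Transversals

variable {α β : Type*} [Fintype α] [Fintype β] [DecidableEq β]

theorem card_le_prod_card_fiber_of_injOn (p : α → β) (S : Finset (Finset α))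
    (hS : ∀ A ∈ S, #A = Fintype.card β ∧ Set.InjOn p A) :
    #S ≤ ∏ b, #{x | p x = b} := by
  classical
  calc #S ≤ #((Fintype.piFinset fun b => ({x | p x = b} : Finset α)).image
        fun g => univ.image g) := by
        refine card_le_card fun A hA => ?_
        obtain ⟨hcard, hinj⟩ := hS A hA
        have himage : A.image p = univ :=
          eq_univ_of_card _ (by rw [card_image_of_injOn hinj, hcard])
        have hsurj : ∀ b, ∃ x ∈ A, p x = b := fun b => mem_image.1 (himage ▸ mem_univ b)
        choose g hgA hpg using hsurj
        refine mem_image.2 ⟨g, Fintype.mem_piFinset.2 fun b => by simp [hpg], ?_⟩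
        refine eq_of_subset_of_card_le (fun x hx => ?_) ?_
        · obtain ⟨b, -, rfl⟩ := mem_image.1 hx
          exact hgA b
        · rw [hcard, card_image_of_injective _ fun b b' h => by simpa [hpg] using congrArg p h,
            card_univ]
    _ ≤ _ := card_image_le
    _ = ∏ b, #{x | p x = b} := Fintype.card_piFinset _

theorem card_le_div_pow_of_injOn (p : α → β) (S : Finset (Finset α))
    (hS : ∀ A ∈ S, #A = Fintype.card β ∧ Set.InjOn p A) :
    (#S : ℝ) ≤ ((Fintype.card α : ℝ) / Fintype.card β) ^ Fintype.card β := by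
  rcases isEmpty_or_nonempty β with _ | _
  · simpa using card_le_prod_card_fiber_of_injOn p S hS
  have hsum : ∑ b, (#{x | p x = b} : ℝ) = Fintype.card α := by
    exact_mod_cast (card_eq_sum_card_fiberwise fun x _ => mem_univ (p x)).symm
  rw [div_pow, le_div_iff₀ (by positivity), ← hsum]
  calc (#S : ℝ) * (Fintype.card β) ^ Fintype.card β
      ≤ (∏ b, (#{x | p x = b} : ℝ)) * (Fintype.card β) ^ Fintype.card β := by
        gcongr
        exact_mod_cast card_le_prod_card_fiber_of_injOn p S hS
    _ ≤ _ := Real.prod_mul_card_pow_le_sum_pow univ _ fun _ _ => by positivity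

end Transversals

theorem neg_logb_le_neg_sum_mul_logb {ι : Type*} {b v : ℝ} (hb : 1 < b) (s : Finset ι)
    (q : ι → ℝ) (hq : ∀ i ∈ s, 0 ≤ q i) (hsum : ∑ i ∈ s, q i = 1) (hv : ∀ i ∈ s, q i ≤ v) :
    -logb b v ≤ -∑ i ∈ s, q i * logb b (q i) := by
  refine neg_le_neg ?_
  calc ∑ i ∈ s, q i * logb b (q i) ≤ ∑ i ∈ s, q i * logb b v := by
        refine sum_le_sum fun i hi => ?_
        rcases (hq i hi).eq_or_lt with hzero | hpos
        · simp [← hzero]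
        · exact mul_le_mul_of_nonneg_left (logb_le_logb_of_le hb hpos (hv i hi)) hpos.le
    _ = logb b v := by rw [← sum_mul, hsum, one_mul]

theorem sub_le_neg_logb_div {b x y : ℝ} (hb : 1 < b) (hx : 0 < x) (hy : 1 ≤ y) :
    (1 - x / y) * logb b y - logb b x ≤ -logb b (x / y) := by
  have hlogy : 0 ≤ logb b y := logb_nonneg hb hy
  have hv : 0 ≤ x / y := by positivity
  rw [logb_div hx.ne' (by positivity)]
  nlinarith

theorem sum_card_fiber_card_eq_choose {α ι : Type*} [Fintype α] [DecidableEq ι]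
    (f : Finset α → ι) (k : ℕ) :
    ∑ t ∈ image f {A : Finset α | #A = k}, #{A : Finset α | #A = k ∧ f A = t} =
      (Fintype.card α).choose k := by
  rw [← card_univ, ← card_powersetCard, ← univ_filter_card_eq, card_eq_sum_card_image f]
  simp only [filter_filter]

theorem div_pow_div_choose_eq {n k : ℕ} (hk : 1 ≤ k) (hkn : k ≤ n) :
    ((n : ℝ) / k) ^ k / n.choose k = (n ^ k / n.descFactorial k) / (k ^ k / k.factorial) := by
  have hkpos : (0 : ℝ) < k := by exact_mod_cast hk
  have hchoose : (0 : ℝ) < n.choose k := by exact_mod_cast Nat.choose_pos hkn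
  rw [Nat.descFactorial_eq_factorial_mul_choose, div_pow]
  push_cast
  field_simp

/-- Let A be uniform over k-element subsets of [n] and f an encoder such that
every index t is assigned only to subsets covered by a single associated
k-partition P t (i.e., P (f A) is injective on A). Then the entropy of f(A) is at
least (1 − n^k k!/(n^{\underline k} k^k))·log₂(k^k/k!) − log₂(n^k/n^{\underline k}). -/
theorem stmt10 (n k : ℕ) (hk : 1 ≤ k) (hkn : k ≤ n)
    (f : Finset (Fin n) → ℕ) (P : ℕ → Fin n → Fin k)
    (hP : ∀ A : Finset (Fin n), A.card = k → Set.InjOn (P (f A)) (A : Set (Fin n))) :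
    -∑ t ∈ ((Finset.univ.filter (fun A : Finset (Fin n) => A.card = k)).image f),
        (((Finset.univ.filter (fun A : Finset (Fin n) => A.card = k ∧ f A = t)).card : ℝ)
            / (Nat.choose n k : ℝ)) *
          Real.logb 2
            (((Finset.univ.filter (fun A : Finset (Fin n) => A.card = k ∧ f A = t)).card : ℝ)
              / (Nat.choose n k : ℝ))
      ≥ (1 - ((n : ℝ) ^ k * (Nat.factorial k : ℝ))
            / ((Nat.descFactorial n k : ℝ) * (k : ℝ) ^ k)) *
          Real.logb 2 ((k : ℝ) ^ k / (Nat.factorial k : ℝ))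
        - Real.logb 2 ((n : ℝ) ^ k / (Nat.descFactorial n k : ℝ)) := by
  have hchoose : (0 : ℝ) < n.choose k := by exact_mod_cast Nat.choose_pos hkn
  have hsum : ∑ t ∈ image f {A : Finset (Fin n) | #A = k},
      (#{A : Finset (Fin n) | #A = k ∧ f A = t} : ℝ) / n.choose k = 1 := by
    rw [← sum_div, ← Nat.cast_sum, sum_card_fiber_card_eq_choose, Fintype.card_fin,
      div_self hchoose.ne']
  have hmass : ∀ t, (#{A : Finset (Fin n) | #A = k ∧ f A = t} : ℝ) / n.choose k ≤
      (n ^ k / n.descFactorial k) / (k ^ k / k.factorial) := fun t => by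
    rw [← div_pow_div_choose_eq hk hkn]
    refine div_le_div_of_nonneg_right ?_ hchoose.le
    simpa using card_le_div_pow_of_injOn (P t) _ fun A hA => by
      obtain ⟨hcard, rfl⟩ := (mem_filter.1 hA).2
      exact ⟨hcard.trans (Fintype.card_fin k).symm, hP A hcard⟩
  have hx : (0 : ℝ) < n ^ k / n.descFactorial k :=
    div_pos (pow_pos (by exact_mod_cast hk.trans hkn) k)
      (by exact_mod_cast Nat.descFactorial_pos.2 hkn)
  have hy : (1 : ℝ) ≤ k ^ k / k.factorial :=
    (one_le_div (by positivity)).2 (by exact_mod_cast k.factorial_le_pow)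
  rw [ge_iff_le, ← div_div_div_eq]
  exact (sub_le_neg_logb_div one_lt_two hx hy).trans <|
    neg_logb_le_neg_sum_mul_logb one_lt_two _ _ (fun _ _ => by positivity) hsum fun t _ => hmass t
end

section
/- For integers b > k ≥ 1, the falling factorial satisfies b^{\underline{k}} > (1/2)·e^{−k}·b^k·(1 − k/b)^{−(b−k)}; equivalently, log(b^{\underline{k}}) > −k log e + k log b + (k − b) log(1 − k/b) − 1. -/
open Real

lemma step12 (n : ℕ) (hn : 1 ≤ n) :
    ((n+1:ℕ):ℝ)^n ≤ Real.exp 1 * (n:ℝ)^n := by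
  have hn0 : (0:ℝ) < n := by exact_mod_cast hn
  have h1 : (1 + 1/(n:ℝ)) ≤ Real.exp (1/(n:ℝ)) := by
    have := Real.add_one_le_exp (1/(n:ℝ)); linarith
  have h2 : (1 + 1/(n:ℝ))^n ≤ Real.exp (1/(n:ℝ))^n :=
    pow_le_pow_left₀ (by positivity) h1 n
  have h3 : Real.exp (1/(n:ℝ))^n = Real.exp 1 := by
    rw [← Real.exp_nat_mul]; congr 1; field_simp
  have h4 : ((n+1:ℕ):ℝ) = (1 + 1/(n:ℝ)) * n := by push_cast; field_simp
  rw [h4, mul_pow]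
  rw [← h3]; exact mul_le_mul_of_nonneg_right h2 (by positivity)

lemma fmono12 (m n : ℕ) (hm : 1 ≤ m) (hmn : m ≤ n) :
    (Nat.factorial m : ℝ) * Real.exp m / (m:ℝ)^m ≤ (Nat.factorial n : ℝ) * Real.exp n / (n:ℝ)^n := by
  induction n, hmn using Nat.le_induction with
  | base => exact le_refl _
  | succ n hmn ih =>
    refine le_trans ih ?_
    have hn : 1 ≤ n := le_trans hm hmn
    have hn0 : (0:ℝ) < n := by exact_mod_cast hn
    have hs := step12 n hn
    have hfac : (Nat.factorial (n+1) : ℝ) = (n+1) * Nat.factorial n := by push_cast [Nat.factorial_succ]; ring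
    have hexp : Real.exp ((n:ℝ)+1) = Real.exp n * Real.exp 1 := by
      rw [← Real.exp_add]
    rw [div_le_div_iff₀ (by positivity) (by positivity)]
    push_cast [hfac, Nat.factorial_succ]
    rw [show ((n:ℝ)+1)^(n+1) = ((n:ℝ)+1) * ((n:ℝ)+1)^n by ring]
    have hs' : ((n:ℝ)+1)^n ≤ Real.exp 1 * (n:ℝ)^n := by push_cast at hs; exact hs
    have he : Real.exp ((n:ℝ)+1) = Real.exp n * Real.exp 1 := hexp
    rw [he]
    have h1 : (Nat.factorial n : ℝ) * Real.exp n * (((n:ℝ)+1) * ((n:ℝ)+1)^n)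
        ≤ (Nat.factorial n : ℝ) * Real.exp n * (((n:ℝ)+1) * (Real.exp 1 * (n:ℝ)^n)) := by
      have : (0:ℝ) ≤ (Nat.factorial n : ℝ) * Real.exp n * ((n:ℝ)+1) := by positivity
      nlinarith [mul_le_mul_of_nonneg_left hs' this]
    calc (Nat.factorial n : ℝ) * Real.exp n * (((n:ℝ)+1) * ((n:ℝ)+1)^n)
        ≤ (Nat.factorial n : ℝ) * Real.exp n * (((n:ℝ)+1) * (Real.exp 1 * (n:ℝ)^n)) := h1
      _ = ((n:ℝ)+1) * (Nat.factorial n) * (Real.exp n * Real.exp 1) * (n:ℝ)^n := by ring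

/-- For b > k ≥ 1: b^{\underline k} > (1/2)·e^{−k}·b^k·(1 − k/b)^{−(b−k)};
equivalently log₂(b^{\underline k}) > −k log₂ e + k log₂ b + (k − b) log₂(1 − k/b) − 1. -/
theorem stmt12 (b k : ℕ) (hk : 1 ≤ k) (hbk : k < b) :
    ((Nat.descFactorial b k : ℝ) >
      (1 / 2) * Real.exp (-(k : ℝ)) * (b : ℝ) ^ k *
        (1 - (k : ℝ) / (b : ℝ)) ^ (-(((b : ℝ) - (k : ℝ)))) ) ∧
    Real.logb 2 (Nat.descFactorial b k : ℝ) >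
      -(k : ℝ) * Real.logb 2 (Real.exp 1) + (k : ℝ) * Real.logb 2 (b : ℝ)
        + ((k : ℝ) - (b : ℝ)) * Real.logb 2 (1 - (k : ℝ) / (b : ℝ)) - 1 := by
  set m : ℕ := b - k with hm_def
  have hm1 : 1 ≤ m := by omega
  have hmb : m < b := by omega
  have hmcast : (m:ℝ) = (b:ℝ) - k := by
    push_cast [hm_def, Nat.cast_sub hbk.le]; ring
  have hb0 : (0:ℝ) < b := by exact_mod_cast Nat.pos_of_ne_zero (by omega)
  have hm0 : (0:ℝ) < m := by exact_mod_cast hm1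
  have hbase : (0:ℝ) < 1 - (k:ℝ)/b := by
    rw [sub_pos, div_lt_one hb0]; exact_mod_cast hbk
  have hbase_eq : 1 - (k:ℝ)/b = (m:ℝ)/b := by rw [hmcast]; field_simp
  -- descFactorial = b!/m!
  have hdesc : (Nat.descFactorial b k : ℝ) = (Nat.factorial b : ℝ) / (Nat.factorial m : ℝ) := by
    have h := Nat.factorial_mul_descFactorial (n := b) (k := k) hbk.le
    have h' : ((b-k).factorial : ℝ) * (Nat.descFactorial b k : ℝ) = (Nat.factorial b : ℝ) := by
      exact_mod_cast congrArg (Nat.cast : ℕ → ℝ) h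
    rw [hm_def]
    field_simp at h' ⊢
    linarith [h']
  -- rewrite the rpow term
  have hrpow : (1 - (k:ℝ)/b) ^ (-(((b:ℝ) - (k:ℝ)))) = ((b:ℝ)/m) ^ m := by
    rw [hbase_eq, ← hmcast, Real.rpow_neg (by positivity), Real.rpow_natCast, ← inv_pow,
      inv_div]
  -- key inequality from fmono12
  have hkey := fmono12 m b hm1 hmb.le
  have hbb0 : (0:ℝ) < (b:ℝ)^b := by positivity
  have hmm0 : (0:ℝ) < (m:ℝ)^m := by positivity
  have hfm0 : (0:ℝ) < (Nat.factorial m : ℝ) := by exact_mod_cast Nat.factorial_pos m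
  have hfb0 : (0:ℝ) < (Nat.factorial b : ℝ) := by exact_mod_cast Nat.factorial_pos b
  -- from hkey: b!/m! ≥ exp m / exp b * b^b / m^m
  have hmain : Real.exp (m:ℝ) / Real.exp (b:ℝ) * ((b:ℝ)^b / (m:ℝ)^m)
      ≤ (Nat.factorial b : ℝ) / (Nat.factorial m : ℝ) := by
    have hkey' : (Nat.factorial m : ℝ) * Real.exp (m:ℝ) * (b:ℝ)^b
        ≤ (Nat.factorial b : ℝ) * Real.exp (b:ℝ) * (m:ℝ)^m := by
      rw [div_le_div_iff₀ hmm0 hbb0] at hkey; linarith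
    rw [div_mul_div_comm, div_le_div_iff₀ (by positivity) hfm0]
    nlinarith [hkey']
  -- identify RHS value
  have hexp : Real.exp (-(k:ℝ)) = Real.exp (m:ℝ) / Real.exp (b:ℝ) := by
    rw [← Real.exp_sub]; congr 1; rw [hmcast]; ring
  have hpow : (b:ℝ)^k * ((b:ℝ)/m)^m = (b:ℝ)^b / (m:ℝ)^m := by
    rw [div_pow, ← mul_div_assoc, ← pow_add]
    congr 2
    omega
  have hval : (1/2 : ℝ) * Real.exp (-(k:ℝ)) * (b:ℝ)^k * (1 - (k:ℝ)/b) ^ (-(((b:ℝ) - (k:ℝ))))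
      = (1/2 : ℝ) * (Real.exp (m:ℝ) / Real.exp (b:ℝ) * ((b:ℝ)^b / (m:ℝ)^m)) := by
    rw [hrpow, hexp]; rw [mul_assoc, mul_assoc, hpow]
  have hpos : (0:ℝ) < Real.exp (m:ℝ) / Real.exp (b:ℝ) * ((b:ℝ)^b / (m:ℝ)^m) := by positivity
  have hfirst : (Nat.descFactorial b k : ℝ) >
      (1/2 : ℝ) * Real.exp (-(k:ℝ)) * (b:ℝ)^k * (1 - (k:ℝ)/b) ^ (-(((b:ℝ) - (k:ℝ)))) := by
    rw [hdesc, hval]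
    nlinarith [hmain, hpos]
  refine ⟨hfirst, ?_⟩
  -- second part: take logb
  have hvalpos : (0:ℝ) < (1/2 : ℝ) * Real.exp (-(k:ℝ)) * (b:ℝ)^k * (1 - (k:ℝ)/b) ^ (-(((b:ℝ) - (k:ℝ)))) := by
    have : (0:ℝ) < (1 - (k:ℝ)/b) ^ (-(((b:ℝ) - (k:ℝ)))) := Real.rpow_pos_of_pos hbase _
    positivity
  have hlogb : Real.logb 2 ((1/2 : ℝ) * Real.exp (-(k:ℝ)) * (b:ℝ)^k * (1 - (k:ℝ)/b) ^ (-(((b:ℝ) - (k:ℝ)))))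
      = -(k:ℝ) * Real.logb 2 (Real.exp 1) + (k:ℝ) * Real.logb 2 (b:ℝ)
        + ((k:ℝ) - (b:ℝ)) * Real.logb 2 (1 - (k:ℝ)/b) - 1 := by
    have h2 : Real.log 2 ≠ 0 := by
      have := Real.log_pos (by norm_num : (1:ℝ) < 2); linarith
    have hbne : (b:ℝ)^k ≠ 0 := by positivity
    have hrne : (1 - (k:ℝ)/b) ^ (-(((b:ℝ) - (k:ℝ)))) ≠ 0 := ne_of_gt (Real.rpow_pos_of_pos hbase _)
    rw [Real.logb, Real.log_mul (by positivity) hrne, Real.log_mul (by positivity) hbne,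
      Real.log_mul (by norm_num) (Real.exp_ne_zero _), Real.log_exp,
      Real.log_pow, Real.log_rpow hbase, Real.logb, Real.logb, Real.logb, Real.log_exp]
    rw [show Real.log (1/2) = -Real.log 2 by rw [one_div, Real.log_inv]]
    field_simp
    ring
  rw [← hlogb]
  exact Real.logb_lt_logb (by norm_num) hvalpos hfirst
end

section
/- For n ≥ b > k ≥ 1, any family of T functions from [n] to [b] such that every k-element subset of [n] admits an injective member must satisfy T ≥ C(n,k) / (C(b,k)·(n/b)^k) = (b^k/b^{\underline{k}})·(n^{\underline{k}}/n^k). -/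
open Finset

/-!
A fixed `g : [n] → [b]` is injective on `∑_{|S| = k} ∏_{j ∈ S} |g⁻¹ j|` of the `k`-subsets of
`[n]`, the `k`-th elementary symmetric function of its fibre sizes. Maclaurin's inequality
`e_k(x) ≤ C(m, k) (∑ x / m) ^ k` for nonnegative `x₁, …, x_m` bounds this by `C(b, k) (n / b) ^ k`,
and a union bound over the `T` functions gives `C(n, k) ≤ T · C(b, k) (n / b) ^ k`.

Maclaurin's inequality goes by induction on `m` through `e_{k+1}(x, a) = e_{k+1}(x) + a e_k(x)`:
with `μ` and `ν` the means before and after adding `a`, the induction hypothesis reduces the step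
to the tangent-line bound `μ ^ k (μ + (k + 1)(ν - μ)) ≤ ν ^ (k + 1)` for `t ↦ t ^ (k + 1)`.
-/

theorem Multiset.esymm_cons_succ {R : Type*} [CommSemiring R] (a : R) (s : Multiset R) (k : ℕ) :
    (a ::ₘ s).esymm (k + 1) = s.esymm (k + 1) + a * s.esymm k := by
  simp [Multiset.esymm, Multiset.powersetCard_cons, Multiset.map_map, Multiset.sum_map_mul_left]

section LinearOrderedField
variable {R : Type*} [Field R] [LinearOrder R] [IsStrictOrderedRing R]

theorem pow_mul_add_succ_mul_sub_le_pow_succ {μ ν : R} (hμ : 0 ≤ μ) (hν : 0 ≤ ν) (k : ℕ) :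
    μ ^ k * (μ + (k + 1) * (ν - μ)) ≤ ν ^ (k + 1) := by
  rcases hμ.eq_or_lt with rfl | hμ
  · rcases k with _ | k
    · simp
    · simp [pow_succ]
      positivity
  have bernoulli := one_add_mul_sub_le_pow (a := ν / μ) (by linarith [div_nonneg hν hμ.le]) (k + 1)
  calc μ ^ k * (μ + (k + 1) * (ν - μ)) = μ ^ (k + 1) * (1 + ((k + 1 : ℕ) : R) * (ν / μ - 1)) := by
        field_simp; push_cast; ring
    _ ≤ μ ^ (k + 1) * (ν / μ) ^ (k + 1) := by gcongr
    _ = ν ^ (k + 1) := by rw [← mul_pow, mul_div_cancel₀ _ hμ.ne']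

theorem Multiset.esymm_le_choose_mul_pow (s : Multiset R) (hs : ∀ x ∈ s, 0 ≤ x) (k : ℕ) :
    s.esymm k ≤ s.card.choose k * (s.sum / s.card) ^ k := by
  induction s using Multiset.induction_on generalizing k with
  | empty => cases k <;> simp [Multiset.esymm, Multiset.powersetCard_zero_right]
  | cons a s ih =>
    have ha : 0 ≤ a := hs a (Multiset.mem_cons_self a s)
    have hs' : ∀ x ∈ s, 0 ≤ x := fun x hx => hs x (Multiset.mem_cons_of_mem hx)
    have ih := ih hs'
    cases k with
    | zero => simp [Multiset.esymm]
    | succ k =>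
      rw [Multiset.card_cons, Multiset.sum_cons, Nat.cast_add_one]
      set m := Multiset.card s
      set μ := s.sum / m
      set ν := (a + s.sum) / (m + 1)
      have hsum_nonneg : 0 ≤ s.sum := Multiset.sum_nonneg hs'
      have hμ : 0 ≤ μ := div_nonneg hsum_nonneg m.cast_nonneg
      have hν : 0 ≤ ν := div_nonneg (add_nonneg ha hsum_nonneg) (by positivity)
      have hmμ : (m : R) * μ = s.sum := by
        rcases eq_or_ne m 0 with hm | hm
        · simp [μ, hm, Multiset.card_eq_zero.1 hm]
        · exact mul_div_cancel₀ _ (Nat.cast_ne_zero.2 hm)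
      have hmν : ((m : R) + 1) * ν = a + s.sum := mul_div_cancel₀ _ (by positivity)
      have pascal : ((m + 1).choose (k + 1) : R) = m.choose k + m.choose (k + 1) := by
        exact_mod_cast Nat.choose_succ_succ' m k
      have absorb : ((m : R) + 1) * m.choose k = (m + 1).choose (k + 1) * (k + 1) := by
        exact_mod_cast Nat.add_one_mul_choose_eq m k
      calc (a ::ₘ s).esymm (k + 1) = s.esymm (k + 1) + a * s.esymm k := s.esymm_cons_succ a k
        _ ≤ m.choose (k + 1) * μ ^ (k + 1) + a * (m.choose k * μ ^ k) := by
          gcongr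
          exacts [ih (k + 1), ih k]
        _ = (m + 1).choose (k + 1) * (μ ^ k * (μ + (k + 1) * (ν - μ))) := by
          refine mul_left_cancel₀ (by positivity : (m : R) + 1 ≠ 0) ?_
          linear_combination (-((m + 1).choose (k + 1) * μ ^ k * (k + 1) : R)) * hmν
            + ((m + 1).choose (k + 1) * μ ^ k * (k + 1) : R) * hmμ
            + (a * μ ^ k - μ ^ (k + 1)) * absorb - ((m + 1) * μ ^ (k + 1)) * pascal
        _ ≤ (m + 1).choose (k + 1) * ν ^ (k + 1) := by
          gcongr
          exact pow_mul_add_succ_mul_sub_le_pow_succ hμ hν k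

end LinearOrderedField

open Classical in
theorem Finset.card_filter_injOn_powersetCard_le {ι κ : Type*} [Fintype κ] (s : Finset ι)
    (g : ι → κ) (k : ℕ) :
    #((s.powersetCard k).filter fun A : Finset ι => Set.InjOn g A) ≤
      ∑ S ∈ univ.powersetCard k, ∏ j ∈ S, #{i ∈ s | g i = j} := by
  let sections := (univ.powersetCard k).sigma fun S => S.pi fun j => {i ∈ s | g i = j}
  let assemble : (Σ S : Finset κ, ∀ j ∈ S, ι) → Finset ι := fun p =>
    p.1.attach.image fun j => p.2 j.1 j.2
  calc #((s.powersetCard k).filter fun A : Finset ι => Set.InjOn g A)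
      ≤ #sections := card_le_card_of_surjOn assemble ?_
    _ = _ := by simp only [sections, card_sigma, card_pi]
  intro A hA
  obtain ⟨⟨hAs, hAk⟩, hinj⟩ : (A ⊆ s ∧ #A = k) ∧ Set.InjOn g ↑A := by simpa using hA
  have preimage : ∀ j ∈ A.image g, ∃ i ∈ A, g i = j := fun j hj => by simpa using hj
  choose σ hσA hσg using preimage
  refine ⟨⟨A.image g, σ⟩, ?_, ?_⟩
  · refine mem_sigma.2 ⟨mem_powersetCard.2 ⟨subset_univ _, ?_⟩, mem_pi.2 fun j hj => ?_⟩
    · rwa [card_image_of_injOn hinj]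
    · exact mem_filter.2 ⟨hAs (hσA j hj), hσg j hj⟩
  · ext i
    simp only [assemble, mem_image, mem_attach, true_and]
    constructor
    · rintro ⟨⟨j, hj⟩, rfl⟩
      exact hσA j hj
    · intro hi
      exact ⟨⟨g i, mem_image_of_mem g hi⟩, hinj (hσA _ _) hi (hσg _ _)⟩

section Covering
variable {R : Type*} [Field R] [LinearOrder R] [IsStrictOrderedRing R]
  {ι κ : Type*} [Fintype ι] [Fintype κ]

open Classical in
theorem card_filter_injOn_powersetCard_univ_le (g : ι → κ) (k : ℕ) :
    (#((univ.powersetCard k).filter fun A : Finset ι => Set.InjOn g A) : R) ≤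
      (Fintype.card κ).choose k * (Fintype.card ι / Fintype.card κ : R) ^ k := by
  let fibres : Multiset R := univ.val.map fun j => (#{i | g i = j} : R)
  have card_fibres : Multiset.card fibres = Fintype.card κ := by simp [fibres]
  have sum_fibres : fibres.sum = Fintype.card ι := by
    simp only [fibres, Finset.sum_map_val]
    exact_mod_cast (card_eq_sum_card_fiberwise fun i _ => mem_univ (g i)).symm
  calc (#((univ.powersetCard k).filter fun A : Finset ι => Set.InjOn g A) : R)
      ≤ ((∑ S ∈ univ.powersetCard k, ∏ j ∈ S, #{i | g i = j} : ℕ) : R) := by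
        exact_mod_cast card_filter_injOn_powersetCard_le univ g k
    _ = fibres.esymm k := by simp [fibres, Finset.esymm_map_val]
    _ ≤ _ := by
      rw [← card_fibres, ← sum_fibres]
      exact fibres.esymm_le_choose_mul_pow (by simp [fibres]) k

theorem choose_card_le_card_mul_of_forall_exists_injOn {τ : Type*} [Fintype τ] (F : τ → ι → κ)
    (k : ℕ) (hF : ∀ A : Finset ι, #A = k → ∃ t, Set.InjOn (F t) A) :
    ((Fintype.card ι).choose k : R) ≤
      Fintype.card τ * ((Fintype.card κ).choose k * (Fintype.card ι / Fintype.card κ : R) ^ k) := by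
  classical
  have cover : univ.powersetCard k ⊆
      univ.biUnion fun t => (univ.powersetCard k).filter fun A : Finset ι => Set.InjOn (F t) A := by
    intro A hA
    obtain ⟨t, ht⟩ := hF A (mem_powersetCard.1 hA).2
    exact mem_biUnion.2 ⟨t, mem_univ t, mem_filter.2 ⟨hA, ht⟩⟩
  calc ((Fintype.card ι).choose k : R) = #(univ.powersetCard k : Finset (Finset ι)) := by simp
    _ ≤ ∑ t, (#((univ.powersetCard k).filter fun A : Finset ι => Set.InjOn (F t) A) : R) := by
      exact_mod_cast (card_le_card cover).trans card_biUnion_le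
    _ ≤ ∑ _t : τ, ((Fintype.card κ).choose k * (Fintype.card ι / Fintype.card κ : R) ^ k) :=
      sum_le_sum fun t _ => card_filter_injOn_powersetCard_univ_le (F t) k
    _ = _ := by simp

end Covering

theorem stmt14_general (n b k T : ℕ)
    (F : Fin T → Fin n → Fin b)
    (hF : ∀ A : Finset (Fin n), A.card = k → ∃ t : Fin T,
      Set.InjOn (F t) (A : Set (Fin n))) :
    (T : ℝ) ≥ (Nat.choose n k : ℝ) /
        ((Nat.choose b k : ℝ) * ((n : ℝ) / (b : ℝ)) ^ k) ∧
    (Nat.choose n k : ℝ) / ((Nat.choose b k : ℝ) * ((n : ℝ) / (b : ℝ)) ^ k)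
      = ((b : ℝ) ^ k / (Nat.descFactorial b k : ℝ)) *
        ((Nat.descFactorial n k : ℝ) / (n : ℝ) ^ k) := by
  have cover := choose_card_le_card_mul_of_forall_exists_injOn (R := ℝ) F k hF
  simp only [Fintype.card_fin] at cover
  refine ⟨div_le_of_le_mul₀ (by positivity) (by positivity) cover, ?_⟩
  simp only [Nat.descFactorial_eq_factorial_mul_choose, Nat.cast_mul]
  field_simp
  rw [div_pow, ← mul_div_assoc, div_div_eq_mul_div]

/-- For n ≥ b > k ≥ 1, any family of T functions [n] → [b] such that every
k-element subset admits an injective member satisfies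
T ≥ C(n,k)/(C(b,k)·(n/b)^k) = (b^k/b^{\underline k})·(n^{\underline k}/n^k). -/
theorem stmt14 (n b k T : ℕ) (hk : 1 ≤ k) (hbk : k < b) (hnb : b ≤ n)
    (F : Fin T → Fin n → Fin b)
    (hF : ∀ A : Finset (Fin n), A.card = k → ∃ t : Fin T,
      Set.InjOn (F t) (A : Set (Fin n))) :
    (T : ℝ) ≥ (Nat.choose n k : ℝ) /
        ((Nat.choose b k : ℝ) * ((n : ℝ) / (b : ℝ)) ^ k) ∧
    (Nat.choose n k : ℝ) / ((Nat.choose b k : ℝ) * ((n : ℝ) / (b : ℝ)) ^ k)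
      = ((b : ℝ) ^ k / (Nat.descFactorial b k : ℝ)) *
        ((Nat.descFactorial n k : ℝ) / (n : ℝ) ^ k) :=
  stmt14_general n b k T F hF
end
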